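/- Let L: ℝ^E → ℝ be coordinate-wise (L₀, L₁)-smooth, i.e., there exist vectors L₀, L₁ ∈ ℝ^E such that for all x, y ∈ ℝ^E with ‖y − x‖₂ ≤ 1/‖L₁‖_∞ and all coordinates j, |∂L(y)/∂x_j − ∂L(x)/∂x_j| ≤ (L₀ⱼ/√E + L₁ⱼ·|∂L(x)/∂x_j|)·‖y − x‖₂. Then for any such x, y, the loss divergence satisfies |L(y) − L(x)| ≤ ‖∇L(x)‖₂·‖y − x‖₂ + ‖L₀ + L₁ ⊙ |∇L(x)|‖₂·‖y − x‖₂², where ⊙ denotes the componentwise product and |∇L(x)| is the componentwise absolute value of the gradient. -/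

import Mathlib

open Real

private lemma euclid_norm_le_of_abs_le {E : ℕ} {a b : EuclideanSpace ℝ (Fin E)}
    (h : ∀ j, |a j| ≤ |b j|) : ‖a‖ ≤ ‖b‖ := by
  rw [EuclideanSpace.norm_eq, EuclideanSpace.norm_eq]
  apply Real.sqrt_le_sqrt
  apply Finset.sum_le_sum
  intro j _
  have h1 : |a j| ^ 2 ≤ |b j| ^ 2 := pow_le_pow_left₀ (abs_nonneg _) (h j) 2
  simpa [Real.norm_eq_abs] using h1

private lemma no_pos_deriv (f f' : ℝ → ℝ) (hf : ∀ t, HasDerivAt f (f' t) t)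
    (hb : BddBelow (Set.range f)) {ε : ℝ} (hε : 0 < ε) (hge : ∀ t, ε ≤ f' t) : False := by
  obtain ⟨m, hm⟩ := hb
  have hmono : Monotone (fun t => f t - ε * t) := by
    have hd : ∀ t, HasDerivAt (fun t => f t - ε * t) (f' t - ε * 1) t :=
      fun t => (hf t).sub ((hasDerivAt_id t).const_mul ε)
    apply monotone_of_deriv_nonneg
    · intro t; exact (hd t).differentiableAt
    · intro t; rw [(hd t).deriv]; linarith [hge t]
  set a := min 0 ((m - 1 - f 0) / ε) with ha
  have h1 : f a - ε * a ≤ f 0 - ε * 0 := hmono (min_le_left _ _)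
  have h2 : a ≤ (m - 1 - f 0) / ε := min_le_right _ _
  have h3 : ε * a ≤ m - 1 - f 0 := by
    have := mul_le_mul_of_nonneg_left h2 hε.le
    rwa [mul_div_cancel₀ _ hε.ne'] at this
  have h4 : m ≤ f a := hm (Set.mem_range_self a)
  linarith

private lemma exists_deriv_small (f f' : ℝ → ℝ) (hf : ∀ t, HasDerivAt f (f' t) t)
    (hc : Continuous f') (hb : BddBelow (Set.range f)) {ε : ℝ} (hε : 0 < ε) :
    ∃ t, |f' t| < ε := by
  by_contra hcon
  push_neg at hcon
  have hsplit : ∀ t, ε ≤ f' t ∨ f' t ≤ -ε := by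
    intro t
    rcases abs_cases (f' t) with ⟨he, _⟩ | ⟨he, _⟩
    · left; linarith [hcon t]
    · right; linarith [hcon t]
  have hsign : (∀ t, ε ≤ f' t) ∨ (∀ t, f' t ≤ -ε) := by
    rcases hsplit 0 with h0 | h0
    · left; intro t
      rcases hsplit t with ht | ht
      · exact ht
      · exfalso
        have hmem : (0:ℝ) ∈ Set.uIcc (f' t) (f' 0) :=
          Set.mem_uIcc.2 (Or.inl ⟨by linarith, by linarith⟩)
        obtain ⟨s, _, hs⟩ := intermediate_value_uIcc hc.continuousOn hmem
        have := hcon s; rw [hs] at this; simp at this; linarith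
    · right; intro t
      rcases hsplit t with ht | ht
      · exfalso
        have hmem : (0:ℝ) ∈ Set.uIcc (f' 0) (f' t) :=
          Set.mem_uIcc.2 (Or.inl ⟨by linarith, by linarith⟩)
        obtain ⟨s, _, hs⟩ := intermediate_value_uIcc hc.continuousOn hmem
        have := hcon s; rw [hs] at this; simp at this; linarith
      · exact ht
  rcases hsign with hp | hn
  · exact no_pos_deriv f f' hf hb hε hp
  · apply no_pos_deriv (fun t => f (-t)) (fun t => -f' (-t)) ?_ ?_ hε ?_
    · intro t
      have := (hf (-t)).comp t (hasDerivAt_neg t)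
      exact this.congr_deriv (by ring)
    · obtain ⟨m, hm⟩ := hb
      exact ⟨m, by rintro r ⟨t, rfl⟩; exact hm (Set.mem_range_self (-t))⟩
    · intro t; show ε ≤ -f' (-t); linarith [hn (-t)]

set_option maxHeartbeats 1000000 in
/-- Lemma 2: loss-divergence bound for a coordinate-wise (L₀,L₁)-smooth loss. -/
theorem loss_divergence_bound
    (E : ℕ) (hE : 0 < E)
    (L : EuclideanSpace ℝ (Fin E) → ℝ)
    (hL : ContDiff ℝ 2 L) (hbdd : BddBelow (Set.range L))
    (L₀ L₁ : EuclideanSpace ℝ (Fin E))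
    (hsmooth : ∀ x y : EuclideanSpace ℝ (Fin E),
      ‖y - x‖ ≤ 1 / (⨆ j, |L₁ j|) → ∀ j : Fin E,
        |gradient L y j - gradient L x j| ≤
          (L₀ j / Real.sqrt E + L₁ j * |gradient L x j|) * ‖y - x‖)
    (x y : EuclideanSpace ℝ (Fin E))
    (hxy : ‖y - x‖ ≤ 1 / (⨆ j, |L₁ j|)) :
    |L y - L x| ≤ ‖gradient L x‖ * ‖y - x‖ +
      ‖(WithLp.equiv 2 (Fin E → ℝ)).symm
        (fun j => L₀ j + L₁ j * |gradient L x j|)‖ * ‖y - x‖ ^ 2 := by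
  haveI : Nonempty (Fin E) := ⟨⟨0, hE⟩⟩
  set g := gradient L with hgdef
  set S := ⨆ j, |L₁ j| with hSdef
  have hSnn : 0 ≤ S :=
    le_trans (abs_nonneg (L₁ ⟨0, hE⟩)) (le_ciSup (f := fun j => |L₁ j|) (Set.Finite.bddAbove (Set.finite_range _)) (⟨0, hE⟩ : Fin E))
  rcases hSnn.eq_or_lt with hS0 | hSpos
  · -- S = 0 : then y = x
    have hyx : y = x := by
      have : ‖y - x‖ ≤ 0 := by rw [← hS0] at hxy; simpa using hxy
      have := le_antisymm this (norm_nonneg _)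
      rwa [norm_eq_zero, sub_eq_zero] at this
    subst hyx
    simp only [sub_self, abs_zero, norm_zero]
    positivity
  · -- main case
    have hdiff : Differentiable ℝ L := hL.differentiable (by norm_num)
    have hgz : ∀ z, g z = (InnerProductSpace.toDual ℝ _).symm (fderiv ℝ L z) := fun z => rfl
    have hgj : ∀ (z : EuclideanSpace ℝ (Fin E)) (j : Fin E),
        fderiv ℝ L z (EuclideanSpace.single j 1) = g z j := by
      intro z j
      have h1 : (inner ℝ (g z) (EuclideanSpace.single j (1:ℝ)) : ℝ)
          = fderiv ℝ L z (EuclideanSpace.single j 1) := by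
        rw [hgz z]; exact InnerProductSpace.toDual_symm_apply
      rw [← h1, EuclideanSpace.inner_single_right]
      simp
    -- Claim A
    have hA : ∀ (z : EuclideanSpace ℝ (Fin E)) (j : Fin E),
        0 ≤ L₀ j / Real.sqrt E + L₁ j * |g z j| := by
      intro z j
      set u : EuclideanSpace ℝ (Fin E) := EuclideanSpace.single ⟨0, hE⟩ (1/S) with hu
      have hnu : ‖(z + u) - z‖ = 1/S := by
        rw [add_sub_cancel_left, hu, EuclideanSpace.norm_single, Real.norm_eq_abs,
          abs_of_nonneg (by positivity)]
      have hs := hsmooth z (z + u) (le_of_eq hnu) j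
      rw [hnu] at hs
      have h0 : (0:ℝ) * (1/S) ≤ (L₀ j / Real.sqrt E + L₁ j * |g z j|) * (1/S) := by
        rw [zero_mul]; exact le_trans (abs_nonneg _) hs
      exact le_of_mul_le_mul_right h0 (by positivity)
    -- small gradient points
    have hsmallg : ∀ (j : Fin E) (ε : ℝ), 0 < ε → ∃ z : EuclideanSpace ℝ (Fin E), |g z j| < ε := by
      intro j ε hε
      set u : EuclideanSpace ℝ (Fin E) := EuclideanSpace.single j 1 with hu
      have hder : ∀ t : ℝ, HasDerivAt (fun t : ℝ => L (t • u)) (g (t • u) j) t := by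
        intro t
        have hψ : HasDerivAt (fun s : ℝ => s • u) u t := by
          simpa using (hasDerivAt_id t).smul_const u
        have := (hdiff (t • u)).hasFDerivAt.comp_hasDerivAt t hψ
        rw [hu, hgj] at this; exact this
      have hcont : Continuous (fun t : ℝ => g (t • u) j) := by
        have hgc : Continuous g := by
          rw [hgdef]
          exact (InnerProductSpace.toDual ℝ _).symm.continuous.comp
            (hL.continuous_fderiv (by norm_num))
        exact (EuclideanSpace.proj j).continuous.comp (hgc.comp (by continuity))
      have hbdd' : BddBelow (Set.range (fun t : ℝ => L (t • u))) := by
        obtain ⟨m, hm⟩ := hbdd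
        exact ⟨m, by rintro r ⟨t, rfl⟩; exact hm (Set.mem_range_self _)⟩
      obtain ⟨t, ht⟩ := exists_deriv_small _ _ hder hcont hbdd' hε
      exact ⟨t • u, ht⟩
    -- L₀ nonneg
    have hL0 : ∀ j, 0 ≤ L₀ j := by
      intro j
      have hsq : 0 < Real.sqrt E := Real.sqrt_pos.mpr (by exact_mod_cast hE)
      have hDnn : 0 ≤ L₀ j / Real.sqrt E := by
        by_contra hneg
        push_neg at hneg
        set ε := -(L₀ j / Real.sqrt E) / (|L₁ j| + 1) with hε
        have hεpos : 0 < ε := div_pos (by linarith) (by positivity)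
        obtain ⟨z, hz⟩ := hsmallg j ε hεpos
        have h1 := hA z j
        have h2 : L₁ j * |g z j| ≤ |L₁ j| * |g z j| :=
          mul_le_mul_of_nonneg_right (le_abs_self _) (abs_nonneg _)
        have h3 : |L₁ j| * |g z j| ≤ |L₁ j| * ε :=
          mul_le_mul_of_nonneg_left hz.le (abs_nonneg _)
        have h4 : L₀ j / Real.sqrt E = -(ε * (|L₁ j| + 1)) := by
          rw [hε]; field_simp
        nlinarith
      have := mul_nonneg hDnn hsq.le
      rwa [div_mul_cancel₀ _ hsq.ne'] at this
    -- the target vector w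
    set w : EuclideanSpace ℝ (Fin E) :=
      (WithLp.equiv 2 (Fin E → ℝ)).symm (fun j => L₀ j + L₁ j * |g x j|) with hw
    have hwj : ∀ j, w j = L₀ j + L₁ j * |g x j| := fun j => rfl
    have hsqE : 1 ≤ Real.sqrt E := by
      rw [show (1:ℝ) = Real.sqrt 1 by simp]
      exact Real.sqrt_le_sqrt (by exact_mod_cast hE)
    have hvw : ∀ j, L₀ j / Real.sqrt E + L₁ j * |g x j| ≤ w j := by
      intro j
      rw [hwj j]
      have := div_le_self (hL0 j) hsqE
      linarith
    have hwnn : ∀ j, 0 ≤ w j := fun j => le_trans (hA x j) (hvw j)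
    -- gradient bound on the segment
    have key : ∀ z ∈ segment ℝ x y, ‖fderiv ℝ L z‖ ≤ ‖g x‖ + ‖w‖ * ‖y - x‖ := by
      rintro z ⟨a, b, ha, hb, hab, rfl⟩
      set z := a • x + b • y with hz
      have hzx : z - x = b • (y - x) := by
        rw [hz]
        have hax : a = 1 - b := by linarith
        rw [hax, sub_smul, one_smul, smul_sub]; abel
      have hnzx : ‖z - x‖ ≤ ‖y - x‖ := by
        rw [hzx, norm_smul, Real.norm_eq_abs, abs_of_nonneg hb]
        have hb1 : b ≤ 1 := by linarith
        calc b * ‖y - x‖ ≤ 1 * ‖y - x‖ := mul_le_mul_of_nonneg_right hb1 (norm_nonneg _)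
          _ = ‖y - x‖ := one_mul _
      have hzS : ‖z - x‖ ≤ 1 / S := le_trans hnzx hxy
      have hdiffnorm : ‖g z - g x‖ ≤ ‖z - x‖ * ‖w‖ := by
        have hcomp : ∀ j, |(g z - g x) j| ≤ |(‖z - x‖ • w) j| := by
          intro j
          have h1 := hsmooth x z hzS j
          have h2 : (g z - g x) j = g z j - g x j := rfl
          have h3 : (‖z - x‖ • w) j = ‖z - x‖ * w j := rfl
          rw [h2, h3, abs_of_nonneg (mul_nonneg (norm_nonneg _) (hwnn j))]
          calc |g z j - g x j| ≤ (L₀ j / Real.sqrt E + L₁ j * |g x j|) * ‖z - x‖ := h1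
            _ ≤ w j * ‖z - x‖ := mul_le_mul_of_nonneg_right (hvw j) (norm_nonneg _)
            _ = ‖z - x‖ * w j := mul_comm _ _
        have := euclid_norm_le_of_abs_le hcomp
        rwa [norm_smul, Real.norm_eq_abs, abs_of_nonneg (norm_nonneg _)] at this
      have hfn : ‖fderiv ℝ L z‖ = ‖g z‖ := by
        rw [hgz z, LinearIsometryEquiv.norm_map]
      rw [hfn]
      have htri : ‖g z‖ ≤ ‖g x‖ + ‖g z - g x‖ := by
        have := norm_add_le (g x) (g z - g x)
        simpa using this
      have : ‖z - x‖ * ‖w‖ ≤ ‖y - x‖ * ‖w‖ :=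
        mul_le_mul_of_nonneg_right hnzx (norm_nonneg _)
      calc ‖g z‖ ≤ ‖g x‖ + ‖g z - g x‖ := htri
        _ ≤ ‖g x‖ + ‖z - x‖ * ‖w‖ := by linarith [hdiffnorm]
        _ ≤ ‖g x‖ + ‖w‖ * ‖y - x‖ := by rw [mul_comm ‖w‖]; linarith
    have hseg := Convex.norm_image_sub_le_of_norm_fderiv_le
      (fun z _ => hdiff z) key (convex_segment x y)
      (left_mem_segment ℝ x y) (right_mem_segment ℝ x y)
    rw [Real.norm_eq_abs] at hseg
    calc |L y - L x| ≤ (‖g x‖ + ‖w‖ * ‖y - x‖) * ‖y - x‖ := hseg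
      _ = ‖g x‖ * ‖y - x‖ + ‖w‖ * ‖y - x‖ ^ 2 := by ring
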